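/- arXiv:math/0501261 — 8 statements merged into one kernel-verified Lean document; each statement's English description precedes it below -/
import Mathlib

section
/- Let r > 0, σ > 0, μ ≥ 0 and s > 0. For each integer n ≥ 1 set p_n := (2π)^{-1/2} ∫_{-∞}^{-(μ/σ)·√(ns)} e^{-x²/2} dx. Then the series Σ_{n=1}^∞ e^{-rns}·p_n/n converges, and (1 − e^{-s(r + μ²/(2σ²))})^{1/2} ≤ exp(− Σ_{n=1}^∞ e^{-rns}·p_n/n) ≤ (1 − e^{-s(r + μ²/σ²)})^{1/(2√2)}. -/
open scoped Real

open MeasureTheory Set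

lemma my_integrable_comp_add (f : ℝ → ℝ) (a : ℝ) (hf : Integrable f) :
    Integrable (fun x => f (x + a)) := by
  have A : MeasurableEmbedding (fun x : ℝ => x + a) :=
    (Homeomorph.addRight a).isClosedEmbedding.measurableEmbedding
  have h : Integrable (f ∘ fun x => x + a) volume := A.integrable_map_iff.mp
    (by rwa [map_add_right_eq_self (volume : Measure ℝ) a])
  exact h

lemma my_shift (f : ℝ → ℝ) (a : ℝ) :
    (∫ x in Ioi a, f x) = ∫ x in Ioi 0, f (x + a) := by
  have A : MeasurableEmbedding (fun x : ℝ => x + a) :=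
    (Homeomorph.addRight a).isClosedEmbedding.measurableEmbedding
  have h := A.setIntegral_map (μ := volume) f (Ioi a)
  rw [map_add_right_eq_self (volume : Measure ℝ) a] at h
  rw [h]
  congr 1
  ext x
  simp

lemma my_iic_eq (a : ℝ) :
    (∫ x in Iic (-a), Real.exp (-x ^ 2 / 2)) = ∫ x in Ioi 0, Real.exp (-(x + a) ^ 2 / 2) := by
  have h := integral_comp_neg_Ioi a (fun x => Real.exp (-x ^ 2 / 2))
  simp only [neg_sq] at h
  rw [← h, my_shift]

lemma my_shift_integrable (a : ℝ) :
    Integrable (fun x : ℝ => Real.exp (-(x + a) ^ 2 / 2)) := by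
  have h := my_integrable_comp_add (fun x : ℝ => Real.exp (-(1/2) * x ^ 2)) a
    (integrable_exp_neg_mul_sq (by norm_num : (0:ℝ) < 1/2))
  convert h using 2 with x
  ring_nf

lemma gauss_upper (a : ℝ) (ha : 0 ≤ a) :
    (∫ x in Iic (-a), Real.exp (-x ^ 2 / 2)) ≤ Real.exp (-a ^ 2 / 2) * (Real.sqrt (π / (1/2)) / 2) := by
  rw [my_iic_eq]
  have hint : Integrable (fun x : ℝ => Real.exp (-a ^ 2 / 2) * Real.exp (-(1/2) * x ^ 2)) :=
    (integrable_exp_neg_mul_sq (by norm_num : (0:ℝ) < 1/2)).const_mul _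
  calc (∫ x in Ioi 0, Real.exp (-(x + a) ^ 2 / 2))
      ≤ ∫ x in Ioi 0, Real.exp (-a ^ 2 / 2) * Real.exp (-(1/2) * x ^ 2) := by
        apply setIntegral_mono_on
        · exact (my_shift_integrable a).integrableOn
        · exact hint.integrableOn
        · exact measurableSet_Ioi
        · intro x hx
          rw [← Real.exp_add]
          apply Real.exp_le_exp.mpr
          have : 0 ≤ a * x := mul_nonneg ha (le_of_lt hx)
          nlinarith
    _ = Real.exp (-a ^ 2 / 2) * (Real.sqrt (π / (1/2)) / 2) := by
        rw [integral_const_mul, integral_gaussian_Ioi]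

lemma gauss_lower (a : ℝ) (ha : 0 ≤ a) :
    Real.exp (-a ^ 2) * (Real.sqrt (π / 1) / 2) ≤ ∫ x in Iic (-a), Real.exp (-x ^ 2 / 2) := by
  rw [my_iic_eq]
  have hshift := my_shift_integrable a
  calc Real.exp (-a ^ 2) * (Real.sqrt (π / 1) / 2)
      = ∫ x in Ioi 0, Real.exp (-a ^ 2) * Real.exp (-(1:ℝ) * x ^ 2) := by
        rw [integral_const_mul, integral_gaussian_Ioi]
    _ ≤ ∫ x in Ioi 0, Real.exp (-(x + a) ^ 2 / 2) := by
        apply setIntegral_mono_on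
        · exact ((integrable_exp_neg_mul_sq (by norm_num : (0:ℝ) < 1)).const_mul _).integrableOn
        · exact hshift.integrableOn
        · exact measurableSet_Ioi
        · intro x hx
          rw [← Real.exp_add]
          apply Real.exp_le_exp.mpr
          nlinarith [sq_nonneg (x - a)]


/-- One-dimensional Black–Scholes continuity correction, case `μ ≥ 0`:
with `p_n = (2π)^{-1/2} ∫_{-∞}^{-(μ/σ)√(ns)} e^{-x²/2} dx`, the series
`Σ_{n≥1} e^{-rns} p_n / n` converges and
`(1 − e^{-s(r+μ²/(2σ²))})^{1/2} ≤ exp(−Σ) ≤ (1 − e^{-s(r+μ²/σ²)})^{1/(2√2)}`. -/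
theorem stmt_2 (r σ μ s : ℝ) (hr : 0 < r) (hσ : 0 < σ) (hμ : 0 ≤ μ) (hs : 0 < s) :
    let p : ℕ → ℝ := fun n =>
      (2 * π) ^ (-(1 : ℝ) / 2) *
        ∫ x in Set.Iic (-(μ / σ) * Real.sqrt (n * s)), Real.exp (-x ^ 2 / 2)
    Summable (fun n : ℕ => Real.exp (-r * (n + 1) * s) * p (n + 1) / (n + 1)) ∧
    (1 - Real.exp (-s * (r + μ ^ 2 / (2 * σ ^ 2)))) ^ ((1 : ℝ) / 2) ≤
      Real.exp (-(∑' n : ℕ, Real.exp (-r * (n + 1) * s) * p (n + 1) / (n + 1))) ∧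
    Real.exp (-(∑' n : ℕ, Real.exp (-r * (n + 1) * s) * p (n + 1) / (n + 1))) ≤
      (1 - Real.exp (-s * (r + μ ^ 2 / σ ^ 2))) ^ (1 / (2 * Real.sqrt 2)) := by
  intro p
  have hπ : (0:ℝ) < 2 * π := by positivity
  set c : ℝ := (2 * π) ^ (-(1 : ℝ) / 2) with hcdef
  have hcval : c = (Real.sqrt (2 * π))⁻¹ := by
    rw [hcdef, neg_div, Real.rpow_neg hπ.le, Real.sqrt_eq_rpow]
  have hcnn : 0 ≤ c := Real.rpow_nonneg hπ.le _
  have hsqrtπ : (0:ℝ) < Real.sqrt π := Real.sqrt_pos.mpr Real.pi_pos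
  have hsqrt2 : (0:ℝ) < Real.sqrt 2 := by positivity
  have h1 : c * (Real.sqrt (π / (1/2)) / 2) = 1 / 2 := by
    rw [hcval, show π / (1/2 : ℝ) = 2 * π by ring]
    have hne : Real.sqrt (2 * π) ≠ 0 := by positivity
    field_simp
  have h2 : c * (Real.sqrt (π / 1) / 2) = (2 * Real.sqrt 2)⁻¹ := by
    rw [hcval, div_one, Real.sqrt_mul (by norm_num : (0:ℝ) ≤ 2) π]
    field_simp
  have hp : ∀ n : ℕ, p n =
      c * ∫ x in Set.Iic (-((μ/σ) * Real.sqrt (n * s))), Real.exp (-x ^ 2 / 2) := by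
    intro n
    simp only [p, neg_mul, hcdef]
  have ht2 : ∀ n : ℕ, ((μ/σ) * Real.sqrt (n * s)) ^ 2 = μ ^ 2 / σ ^ 2 * (n * s) := by
    intro n
    rw [mul_pow, Real.sq_sqrt (by positivity), div_pow]
  have htnn : ∀ n : ℕ, 0 ≤ (μ/σ) * Real.sqrt (n * s) := by
    intro n; positivity
  have hpub : ∀ n : ℕ, p n ≤ 1/2 * Real.exp (-(μ ^ 2 / σ ^ 2 * (n * s)) / 2) := by
    intro n
    calc p n = c * ∫ x in Set.Iic (-((μ/σ) * Real.sqrt (n*s))), Real.exp (-x^2/2) := hp n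
      _ ≤ c * (Real.exp (-((μ/σ) * Real.sqrt (n*s)) ^ 2 / 2) * (Real.sqrt (π / (1/2)) / 2)) :=
          mul_le_mul_of_nonneg_left (gauss_upper _ (htnn n)) hcnn
      _ = (c * (Real.sqrt (π / (1/2)) / 2)) * Real.exp (-((μ/σ) * Real.sqrt (n*s)) ^ 2 / 2) := by
          ring
      _ = 1/2 * Real.exp (-(μ ^ 2 / σ ^ 2 * (n * s)) / 2) := by rw [h1, ht2]
  have hplb : ∀ n : ℕ, (2 * Real.sqrt 2)⁻¹ * Real.exp (-(μ ^ 2 / σ ^ 2 * (n * s))) ≤ p n := by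
    intro n
    calc (2 * Real.sqrt 2)⁻¹ * Real.exp (-(μ ^ 2 / σ ^ 2 * (n * s)))
        = (c * (Real.sqrt (π / 1) / 2)) * Real.exp (-((μ/σ) * Real.sqrt (n*s)) ^ 2) := by
          rw [h2, ht2]
      _ = c * (Real.exp (-((μ/σ) * Real.sqrt (n*s)) ^ 2) * (Real.sqrt (π / 1) / 2)) := by ring
      _ ≤ p n := by
          rw [hp n]
          exact mul_le_mul_of_nonneg_left (gauss_lower _ (htnn n)) hcnn
  set x₁ : ℝ := Real.exp (-s * (r + μ ^ 2 / (2 * σ ^ 2))) with hx1def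
  set x₂ : ℝ := Real.exp (-s * (r + μ ^ 2 / σ ^ 2)) with hx2def
  have hσ2 : σ ^ 2 ≠ 0 := by positivity
  have hx1pos : 0 < x₁ := Real.exp_pos _
  have hx2pos : 0 < x₂ := Real.exp_pos _
  have hx1lt : x₁ < 1 := by
    rw [hx1def, Real.exp_lt_one_iff]
    have : 0 < r + μ ^ 2 / (2 * σ ^ 2) := by positivity
    nlinarith
  have hx2lt : x₂ < 1 := by
    rw [hx2def, Real.exp_lt_one_iff]
    have : 0 < r + μ ^ 2 / σ ^ 2 := by positivity
    nlinarith
  have hub : ∀ n : ℕ, Real.exp (-r * (n + 1) * s) * p (n + 1) / (n + 1) ≤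
      1/2 * x₁ ^ (n + 1) / (n + 1) := by
    intro n
    have hnum : Real.exp (-r * (n + 1) * s) * p (n + 1) ≤ 1/2 * x₁ ^ (n + 1) := by
      have hprod : Real.exp (-r * (n + 1) * s) *
          Real.exp (-(μ ^ 2 / σ ^ 2 * ((n+1 : ℕ) * s)) / 2) = x₁ ^ (n + 1) := by
        rw [← Real.exp_add, hx1def, ← Real.exp_nat_mul]
        congr 1
        push_cast
        field_simp
        ring
      calc Real.exp (-r * (n + 1) * s) * p (n + 1)
          ≤ Real.exp (-r * (n + 1) * s) *
            (1/2 * Real.exp (-(μ ^ 2 / σ ^ 2 * ((n+1 : ℕ) * s)) / 2)) :=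
            mul_le_mul_of_nonneg_left (hpub (n+1)) (Real.exp_pos _).le
        _ = 1/2 * (Real.exp (-r * (n + 1) * s) *
            Real.exp (-(μ ^ 2 / σ ^ 2 * ((n+1 : ℕ) * s)) / 2)) := by ring
        _ = 1/2 * x₁ ^ (n + 1) := by rw [hprod]
    have hd : (0:ℝ) < (n:ℝ) + 1 := by positivity
    exact div_le_div_of_nonneg_right hnum hd.le
  have hlb : ∀ n : ℕ, (2 * Real.sqrt 2)⁻¹ * x₂ ^ (n + 1) / (n + 1) ≤
      Real.exp (-r * (n + 1) * s) * p (n + 1) / (n + 1) := by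
    intro n
    have hnum : (2 * Real.sqrt 2)⁻¹ * x₂ ^ (n + 1) ≤
        Real.exp (-r * (n + 1) * s) * p (n + 1) := by
      have hprod : Real.exp (-r * (n + 1) * s) *
          Real.exp (-(μ ^ 2 / σ ^ 2 * ((n+1 : ℕ) * s))) = x₂ ^ (n + 1) := by
        rw [← Real.exp_add, hx2def, ← Real.exp_nat_mul]
        congr 1
        push_cast
        field_simp
        ring
      calc (2 * Real.sqrt 2)⁻¹ * x₂ ^ (n + 1)
          = Real.exp (-r * (n + 1) * s) *
            ((2 * Real.sqrt 2)⁻¹ * Real.exp (-(μ ^ 2 / σ ^ 2 * ((n+1 : ℕ) * s)))) := by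
            rw [← hprod]; ring
        _ ≤ Real.exp (-r * (n + 1) * s) * p (n + 1) :=
            mul_le_mul_of_nonneg_left (hplb (n+1)) (Real.exp_pos _).le
    have hd : (0:ℝ) < (n:ℝ) + 1 := by positivity
    exact div_le_div_of_nonneg_right hnum hd.le
  have hnn : ∀ n : ℕ, 0 ≤ Real.exp (-r * (n + 1) * s) * p (n + 1) / (n + 1) := by
    intro n
    refine le_trans ?_ (hlb n)
    positivity
  have hHS1 : HasSum (fun n : ℕ => x₁ ^ (n + 1) / (n + 1)) (-Real.log (1 - x₁)) :=
    Real.hasSum_pow_div_log_of_abs_lt_one (by rw [abs_of_pos hx1pos]; exact hx1lt)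
  have hHS2 : HasSum (fun n : ℕ => x₂ ^ (n + 1) / (n + 1)) (-Real.log (1 - x₂)) :=
    Real.hasSum_pow_div_log_of_abs_lt_one (by rw [abs_of_pos hx2pos]; exact hx2lt)
  have hHS1' : HasSum (fun n : ℕ => 1/2 * x₁ ^ (n + 1) / (n + 1))
      (1/2 * -Real.log (1 - x₁)) := by
    have e1 : (fun n : ℕ => 1/2 * x₁ ^ (n + 1) / (n + 1)) =
        fun n : ℕ => 1/2 * (x₁ ^ (n + 1) / (n + 1)) := by funext n; ring
    rw [e1]; exact hHS1.mul_left (1/2)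
  have hHS2' : HasSum (fun n : ℕ => (2 * Real.sqrt 2)⁻¹ * x₂ ^ (n + 1) / (n + 1))
      ((2 * Real.sqrt 2)⁻¹ * -Real.log (1 - x₂)) := by
    have e2 : (fun n : ℕ => (2 * Real.sqrt 2)⁻¹ * x₂ ^ (n + 1) / (n + 1)) =
        fun n : ℕ => (2 * Real.sqrt 2)⁻¹ * (x₂ ^ (n + 1) / (n + 1)) := by funext n; ring
    rw [e2]; exact hHS2.mul_left ((2 * Real.sqrt 2)⁻¹)
  have hsummable : Summable (fun n : ℕ => Real.exp (-r * (n + 1) * s) * p (n + 1) / (n + 1)) :=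
    Summable.of_nonneg_of_le hnn hub hHS1'.summable
  refine ⟨hsummable, ?_, ?_⟩
  · have hSle : (∑' n : ℕ, Real.exp (-r * (n + 1) * s) * p (n + 1) / (n + 1)) ≤
        1/2 * -Real.log (1 - x₁) := by
      rw [← hHS1'.tsum_eq]
      exact Summable.tsum_le_tsum hub hsummable hHS1'.summable
    rw [Real.rpow_def_of_pos (by linarith : (0:ℝ) < 1 - x₁)]
    apply Real.exp_le_exp.mpr
    linarith
  · have hSge : (2 * Real.sqrt 2)⁻¹ * -Real.log (1 - x₂) ≤
        (∑' n : ℕ, Real.exp (-r * (n + 1) * s) * p (n + 1) / (n + 1)) := by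
      rw [← hHS2'.tsum_eq]
      exact Summable.tsum_le_tsum hlb hHS2'.summable hsummable
    rw [Real.rpow_def_of_pos (by linarith : (0:ℝ) < 1 - x₂)]
    apply Real.exp_le_exp.mpr
    have : Real.log (1 - x₂) * (1 / (2 * Real.sqrt 2)) =
        -((2 * Real.sqrt 2)⁻¹ * -Real.log (1 - x₂)) := by ring
    rw [this]
    linarith
end

section
/- For every real number y ≤ 0, one has (√π / 2)·e^{-y²} ≤ ∫_{-∞}^{y} e^{-x²/2} dx ≤ √(π/2)·e^{-y²/2}. -/
open MeasureTheory Real Set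

lemma shift_Iic (g : ℝ → ℝ) (y : ℝ) :
    ∫ x in Set.Iic y, g (x - y) = ∫ x in Set.Iic 0, g x := by
  rw [← integral_indicator measurableSet_Iic, ← integral_indicator measurableSet_Iic,
    ← integral_add_right_eq_self (Set.indicator (Set.Iic y) (fun x => g (x - y))) y]
  congr 1
  ext x
  by_cases hx : x ≤ 0
  · rw [Set.indicator_of_mem (by simpa using hx),
      Set.indicator_of_mem (by simpa using hx)]
    simp
  · rw [Set.indicator_of_notMem (by simpa using hx),
      Set.indicator_of_notMem (by simpa using hx)]

lemma gauss_Iic (b : ℝ) (hb : 0 < b) :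
    ∫ x in Set.Iic (0:ℝ), Real.exp (-b * x ^ 2) = Real.sqrt (π / b) / 2 := by
  have htot : (∫ x : ℝ, Real.exp (-b * x ^ 2)) = Real.sqrt (π / b) := integral_gaussian b
  have hsplit : (∫ x : ℝ, Real.exp (-b * x ^ 2)) =
      (∫ x in Set.Iic (0:ℝ), Real.exp (-b * x ^ 2)) +
      ∫ x in Set.Ioi (0:ℝ), Real.exp (-b * x ^ 2) := by
    rw [← setIntegral_union (by simp [Set.disjoint_left]) measurableSet_Ioi
      (integrable_exp_neg_mul_sq hb).integrableOn (integrable_exp_neg_mul_sq hb).integrableOn,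
      Set.Iic_union_Ioi, setIntegral_univ]
  rw [integral_gaussian_Ioi b] at hsplit
  rw [htot] at hsplit
  linarith

/-- Two-sided Gaussian tail estimate: for every `y ≤ 0`,
`(√π / 2)·e^{-y²} ≤ ∫_{-∞}^{y} e^{-x²/2} dx ≤ √(π/2)·e^{-y²/2}`. -/
theorem stmt_4 (y : ℝ) (hy : y ≤ 0) :
    Real.sqrt Real.pi / 2 * Real.exp (-y ^ 2) ≤
      (∫ x in Set.Iic y, Real.exp (-x ^ 2 / 2)) ∧
    (∫ x in Set.Iic y, Real.exp (-x ^ 2 / 2)) ≤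
      Real.sqrt (Real.pi / 2) * Real.exp (-y ^ 2 / 2) := by
  have hint : ∀ b : ℝ, 0 < b → IntegrableOn (fun x => Real.exp (-b * (x - y) ^ 2)) (Set.Iic y) := by
    intro b hb
    have := (integrable_exp_neg_mul_sq hb).comp_sub_right y
    exact this.integrableOn
  have hint2 : IntegrableOn (fun x => Real.exp (-x ^ 2 / 2)) (Set.Iic y) := by
    have : Integrable (fun x : ℝ => Real.exp (-(1/2 : ℝ) * x ^ 2)) :=
      integrable_exp_neg_mul_sq (by norm_num)
    refine (this.congr ?_).integrableOn
    filter_upwards with x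
    ring_nf
  constructor
  · -- lower bound
    have hmono : Real.exp (-y ^ 2) * ∫ x in Set.Iic y, Real.exp (-1 * (x - y) ^ 2) ≤
        ∫ x in Set.Iic y, Real.exp (-x ^ 2 / 2) := by
      rw [← integral_const_mul]
      refine setIntegral_mono_on ((hint 1 one_pos).const_mul _) hint2 measurableSet_Iic ?_
      intro x hx
      simp only [← Real.exp_add]
      apply Real.exp_le_exp.2
      have h1 : y * (x - y) ≤ (y ^ 2 + (x - y) ^ 2) / 2 := by nlinarith [sq_nonneg (y - (x - y))]
      nlinarith
    have heq : (∫ x in Set.Iic y, Real.exp (-1 * (x - y) ^ 2)) = Real.sqrt π / 2 := by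
      rw [shift_Iic (fun x => Real.exp (-1 * x ^ 2)) y, gauss_Iic 1 one_pos]
      norm_num
    rw [heq] at hmono
    linarith [hmono]
  · -- upper bound
    have hmono : (∫ x in Set.Iic y, Real.exp (-x ^ 2 / 2)) ≤
        Real.exp (-y ^ 2 / 2) * ∫ x in Set.Iic y, Real.exp (-(1/2 : ℝ) * (x - y) ^ 2) := by
      rw [← integral_const_mul]
      refine setIntegral_mono_on hint2 ((hint (1/2) (by norm_num)).const_mul _) measurableSet_Iic ?_
      intro x hx
      simp only [← Real.exp_add]
      apply Real.exp_le_exp.2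
      have hxy : x - y ≤ 0 := by simpa [sub_nonpos] using hx
      have : 0 ≤ y * (x - y) := by nlinarith
      nlinarith
    have heq : (∫ x in Set.Iic y, Real.exp (-(1/2 : ℝ) * (x - y) ^ 2)) = Real.sqrt (π / 2) := by
      rw [shift_Iic (fun x => Real.exp (-(1/2 : ℝ) * x ^ 2)) y, gauss_Iic (1/2) (by norm_num)]
      rw [show π / (1/2 : ℝ) = 4 * (π / 2) by ring, Real.sqrt_mul (by norm_num)]
      rw [show Real.sqrt 4 = 2 by rw [show (4:ℝ) = 2^2 by norm_num, Real.sqrt_sq (by norm_num)]]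
      ring
    rw [heq] at hmono
    linarith
end

section
/- Let A ⊆ ℝ be a measurable set of positive Lebesgue measure, and let p, q : ℝ → ℝ be continuous functions that are strictly positive on A and integrable over A. Let f : ℝ → ℝ be nonnegative and monotonely decreasing (antitone), with f·p and f·q integrable over A. Assume that x ↦ p(x)/q(x) is monotonely decreasing on A and that ∫_A p dλ = ∫_A q dλ. Then ∫_A f·p dλ ≥ ∫_A f·q dλ. -/
open MeasureTheory

/-- If a nonnegative function on `A` is integrable with zero integral, it is a.e. zero. -/
lemma stmt_7_aux_eq (A : Set ℝ) (hA : MeasurableSet A) (g : ℝ → ℝ)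
    (hg : IntegrableOn g A volume)
    (hsign : ∀ x ∈ A, 0 ≤ g x)
    (hint0 : ∫ x in A, g x = 0) :
    ∀ᵐ x ∂(volume.restrict A), g x = 0 := by
  have h0 : 0 ≤ᵐ[volume.restrict A] g :=
    (ae_restrict_iff' hA).2 (Filter.Eventually.of_forall hsign)
  have := (integral_eq_zero_iff_of_nonneg_ae h0 hg).1 hint0
  filter_upwards [this] with x hx using hx

/-- Equality case: if `p = q` a.e. on `A`, the `f`-weighted integrals agree. -/
lemma stmt_7_aux_congr (A : Set ℝ) (p q f : ℝ → ℝ)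
    (h : ∀ᵐ x ∂(volume.restrict A), p x = q x) :
    ∫ x in A, f x * q x = ∫ x in A, f x * p x := by
  refine integral_congr_ae ?_
  filter_upwards [h] with x hx
  rw [hx]

/-- Single-crossing auxiliary lemma: if `p, q` are continuous, positive and
integrable on a set `A ⊆ ℝ` of positive Lebesgue measure with equal integrals
over `A`, `f` is nonnegative and antitone with `f·p` and `f·q` integrable on
`A`, and `p/q` is antitone on `A`, then `∫_A f·p ≥ ∫_A f·q`. -/
theorem stmt_7 (A : Set ℝ) (hA : MeasurableSet A) (hApos : 0 < volume A)
    (p q f : ℝ → ℝ) (hp : Continuous p) (hq : Continuous q)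
    (hppos : ∀ x ∈ A, 0 < p x) (hqpos : ∀ x ∈ A, 0 < q x)
    (hpint : IntegrableOn p A volume) (hqint : IntegrableOn q A volume)
    (hf0 : ∀ x, 0 ≤ f x) (hfanti : Antitone f)
    (hfp : IntegrableOn (fun x => f x * p x) A volume)
    (hfq : IntegrableOn (fun x => f x * q x) A volume)
    (hratio : AntitoneOn (fun x => p x / q x) A)
    (hint : ∫ x in A, p x = ∫ x in A, q x) :
    ∫ x in A, f x * q x ≤ ∫ x in A, f x * p x := by
  set S : Set ℝ := {x ∈ A | q x ≤ p x} with hS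
  -- key downward-closedness: if y ∈ S and x ∈ A with x ≤ y then x ∈ S
  have hdown : ∀ x ∈ A, ∀ y ∈ S, x ≤ y → q x ≤ p x := by
    intro x hx y hy hxy
    have h1 : 1 ≤ p y / q y := (one_le_div (hqpos y hy.1)).2 hy.2
    have h2 : p y / q y ≤ p x / q x := hratio hx hy.1 hxy
    exact (one_le_div (hqpos x hx)).1 (le_trans h1 h2)
  by_cases hne : S.Nonempty
  · by_cases hbdd : BddAbove S
    · -- main case: single crossing at c := sSup S
      set c : ℝ := sSup S with hc
      have key : ∀ x ∈ A, 0 ≤ (f x - f c) * (p x - q x) := by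
        intro x hx
        rcases lt_trichotomy x c with hlt | heq | hgt
        · obtain ⟨y, hyS, hxy⟩ : ∃ y ∈ S, x < y := by
            by_contra hcon
            push_neg at hcon
            exact absurd (csSup_le hne hcon) (not_le.2 hlt)
          have hpq : q x ≤ p x := hdown x hx y hyS hxy.le
          have hfc : f c ≤ f x := hfanti hlt.le
          exact mul_nonneg (sub_nonneg.2 hfc) (sub_nonneg.2 hpq)
        · rw [heq]; simp
        · have hxS : x ∉ S := fun h => absurd (le_csSup hbdd h) (not_le.2 hgt)
          have hpq : p x ≤ q x := le_of_not_ge fun h => hxS ⟨hx, h⟩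
          have hfc : f x ≤ f c := hfanti hgt.le
          have h : (f x - f c) * (p x - q x) = (f c - f x) * (q x - p x) := by ring
          rw [h]
          exact mul_nonneg (sub_nonneg.2 hfc) (sub_nonneg.2 hpq)
      have hI : IntegrableOn (fun x => (f x - f c) * (p x - q x)) A volume := by
        have : IntegrableOn
            (fun x => (f x * p x - f x * q x) - f c * (p x - q x)) A volume :=
          (hfp.sub hfq).sub ((hpint.sub hqint).const_mul (f c))
        exact this.congr_fun (fun x _ => by ring) hA
      have h0 : 0 ≤ ∫ x in A, (f x - f c) * (p x - q x) :=
        setIntegral_nonneg hA key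
      have hsplit : ∫ x in A, (f x - f c) * (p x - q x)
          = (∫ x in A, f x * p x) - (∫ x in A, f x * q x)
            - f c * ((∫ x in A, p x) - (∫ x in A, q x)) := by
        have heq : ∀ x, (f x - f c) * (p x - q x)
            = (f x * p x - f x * q x) - f c * (p x - q x) := fun x => by ring
        have h1 : IntegrableOn (fun x => f x * p x - f x * q x) A volume := hfp.sub hfq
        have h2 : IntegrableOn (fun x => f c * (p x - q x)) A volume :=
          (hpint.sub hqint).const_mul (f c)
        rw [integral_congr_ae (Filter.Eventually.of_forall fun x => heq x)]
        rw [integral_sub h1 h2, integral_sub hfp hfq, integral_const_mul,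
          integral_sub hpint hqint]
      rw [hsplit, hint] at h0
      have : f c * ((∫ x in A, q x) - (∫ x in A, q x)) = 0 := by ring
      linarith [h0, this]
    · -- S nonempty unbounded above: p ≥ q on all of A, hence p = q a.e.
      have hge : ∀ x ∈ A, 0 ≤ p x - q x := by
        intro x hx
        obtain ⟨y, hyS, hxy⟩ : ∃ y ∈ S, x ≤ y := by
          by_contra hcon
          push_neg at hcon
          exact hbdd ⟨x, fun y hy => (hcon y hy).le⟩
        linarith [hdown x hx y hyS hxy]
      have hae := stmt_7_aux_eq A hA (fun x => p x - q x) (hpint.sub hqint) hge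
        (by rw [integral_sub hpint hqint, hint, sub_self])
      refine le_of_eq (stmt_7_aux_congr A p q f ?_)
      filter_upwards [hae] with x hx
      linarith
  · -- S empty: q > p on A, hence p = q a.e.
    have hge : ∀ x ∈ A, 0 ≤ q x - p x := by
      intro x hx
      by_contra hcon
      exact hne ⟨x, hx, by linarith⟩
    have hae := stmt_7_aux_eq A hA (fun x => q x - p x) (hqint.sub hpint) hge
      (by rw [integral_sub hqint hpint, hint, sub_self])
    refine le_of_eq (stmt_7_aux_congr A p q f ?_)
    filter_upwards [hae] with x hx
    linarith
end

section
/- Let γ be the standard Gaussian measure on ℝ² (the product of two standard normal distributions on ℝ). For every real α ≥ 0, (1/(4√2))·e^{-α²} ≤ γ({(x,z) ∈ ℝ² : x + z ≥ α, x ≥ 0, z ≥ 0}) ≤ (1/√2)·e^{-α²/4}. -/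
open MeasureTheory ProbabilityTheory

lemma gmap_reflect (m : ℝ) (v : NNReal) :
    (gaussianReal m v).map (fun x => 2*m - x) = gaussianReal m v := by
  have h1 : (fun x : ℝ => 2*m - x) = (fun y => y + 2*m) ∘ (fun x => (-1:ℝ) * x) := by
    funext x; simp; ring
  rw [h1, ← Measure.map_map (by fun_prop) (by fun_prop),
    gaussianReal_map_const_mul, gaussianReal_map_add_const]
  congr 1
  · ring
  · ext; simp

lemma gauss_Ici_half (m : ℝ) {v : NNReal} (hv : v ≠ 0) :
    gaussianReal m v (Set.Ici m) = 1/2 := by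
  have hmap := gmap_reflect m v
  have hIic : gaussianReal m v (Set.Iic m) = gaussianReal m v (Set.Ici m) := by
    conv_rhs => rw [← hmap]
    rw [Measure.map_apply (by fun_prop) measurableSet_Ici]
    congr 1
    ext x
    simp only [Set.mem_preimage, Set.mem_Ici, Set.mem_Iic]
    constructor <;> intro h <;> linarith
  have hsing : gaussianReal m v {m} = 0 :=
    (gaussianReal_absolutelyContinuous m hv) (Real.volume_singleton)
  have hIio : gaussianReal m v (Set.Iio m) = gaussianReal m v (Set.Ici m) := by
    rw [← hIic, show Set.Iic m = Set.Iio m ∪ {m} by ext x; simp [le_iff_lt_or_eq]]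
    exact le_antisymm (measure_mono Set.subset_union_left)
      ((measure_union_le _ _).trans (by rw [hsing, add_zero]))
  have hcompl : gaussianReal m v (Set.Ici m) + gaussianReal m v (Set.Iio m) = 1 := by
    rw [show Set.Iio m = (Set.Ici m)ᶜ by simp]
    rw [measure_add_measure_compl measurableSet_Ici, measure_univ]
  rw [hIio] at hcompl
  have h2 : 2 * gaussianReal m v (Set.Ici m) = 1 := by rw [two_mul]; exact hcompl
  rw [ENNReal.eq_div_iff (by norm_num) (by norm_num), mul_comm] at *
  exact h2

lemma gauss_prod_halfplane (m : ℝ) {v : NNReal} (hv : v ≠ 0) :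
    ((gaussianReal m v).prod (gaussianReal m v)) {p : ℝ × ℝ | 2*m ≤ p.1 + p.2} = 1/2 := by
  set μ := gaussianReal m v with hμ
  have hT : (μ.prod μ).map (Prod.map (fun x => 2*m - x) (fun x => 2*m - x)) = μ.prod μ := by
    rw [← Measure.map_prod_map _ _ (by fun_prop) (by fun_prop), gmap_reflect]
  have hmeas : MeasurableSet {p : ℝ × ℝ | 2*m ≤ p.1 + p.2} :=
    measurableSet_le measurable_const (by fun_prop)
  have hsym : (μ.prod μ) {p : ℝ × ℝ | p.1 + p.2 ≤ 2*m}
      = (μ.prod μ) {p : ℝ × ℝ | 2*m ≤ p.1 + p.2} := by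
    conv_rhs => rw [← hT]
    rw [Measure.map_apply (by fun_prop) hmeas]
    congr 1
    ext p
    simp only [Set.mem_preimage, Set.mem_setOf_eq, Prod.map]
    constructor <;> intro h <;> linarith
  have hline : (μ.prod μ) {p : ℝ × ℝ | p.1 + p.2 = 2*m} = 0 := by
    have hm : MeasurableSet {p : ℝ × ℝ | p.1 + p.2 = 2*m} :=
      measurableSet_eq_fun (by fun_prop) measurable_const
    rw [Measure.prod_apply hm]
    have : ∀ x : ℝ, (Prod.mk x ⁻¹' {p : ℝ × ℝ | p.1 + p.2 = 2*m}) = {2*m - x} := by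
      intro x; ext z; simp [Set.mem_preimage]; constructor <;> intro h <;> linarith
    simp_rw [this]
    have h0 : ∀ x : ℝ, μ {2*m - x} = 0 := fun x =>
      (gaussianReal_absolutelyContinuous m hv) (Real.volume_singleton)
    simp [h0]
  have hlt : (μ.prod μ) {p : ℝ × ℝ | p.1 + p.2 < 2*m}
      = (μ.prod μ) {p : ℝ × ℝ | 2*m ≤ p.1 + p.2} := by
    rw [← hsym, show {p : ℝ × ℝ | p.1 + p.2 ≤ 2*m}
        = {p : ℝ × ℝ | p.1 + p.2 < 2*m} ∪ {p : ℝ × ℝ | p.1 + p.2 = 2*m} by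
      ext p; simp [le_iff_lt_or_eq]]
    exact le_antisymm (measure_mono Set.subset_union_left)
      ((measure_union_le _ _).trans (by rw [hline, add_zero]))
  have hcompl : (μ.prod μ) {p : ℝ × ℝ | 2*m ≤ p.1 + p.2}
      + (μ.prod μ) {p : ℝ × ℝ | p.1 + p.2 < 2*m} = 1 := by
    rw [show {p : ℝ × ℝ | p.1 + p.2 < 2*m} = {p : ℝ × ℝ | 2*m ≤ p.1 + p.2}ᶜ by
      ext p; simp [not_le]]
    rw [measure_add_measure_compl hmeas, measure_univ]
  rw [hlt] at hcompl
  have h2 : 2 * (μ.prod μ) {p : ℝ × ℝ | 2*m ≤ p.1 + p.2} = 1 := by rw [two_mul]; exact hcompl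
  rw [ENNReal.eq_div_iff (by norm_num) (by norm_num), mul_comm] at *
  exact h2

lemma prod_withDensity_apply (f g : ℝ → ENNReal) (hf : Measurable f) (hg : Measurable g)
    {s : Set (ℝ × ℝ)} (hs : MeasurableSet s) :
    (((volume : Measure ℝ).withDensity f).prod ((volume : Measure ℝ).withDensity g)) s
      = ∫⁻ p in s, f p.1 * g p.2 ∂((volume : Measure ℝ).prod volume) := by
  have hF : Measurable (fun p : ℝ × ℝ => s.indicator (fun q : ℝ × ℝ => g q.2) p) :=
    (hg.comp measurable_snd).indicator hs
  have key : ∀ x : ℝ, (volume.withDensity g) (Prod.mk x ⁻¹' s)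
      = ∫⁻ z, s.indicator (fun q : ℝ × ℝ => g q.2) (x, z) := by
    intro x
    rw [withDensity_apply _ (measurable_prodMk_left hs),
      ← lintegral_indicator (measurable_prodMk_left hs) g]
    exact lintegral_congr fun z => by
      by_cases h : (x, z) ∈ s <;> simp [Set.indicator, h]
  rw [Measure.prod_apply hs]
  simp_rw [key]
  rw [lintegral_withDensity_eq_lintegral_mul _ hf (by
    exact Measurable.lintegral_prod_right' hF)]
  rw [← lintegral_indicator hs, lintegral_prod _
    (Measurable.aemeasurable (Measurable.indicator (by fun_prop) hs))]
  congr 1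
  ext x
  simp only [Pi.mul_apply]
  calc f x * ∫⁻ z, s.indicator (fun q : ℝ × ℝ => g q.2) (x, z)
      = ∫⁻ z, f x * s.indicator (fun q : ℝ × ℝ => g q.2) (x, z) :=
        (lintegral_const_mul (f x) (hF.comp measurable_prodMk_left)).symm
    _ = ∫⁻ y, s.indicator (fun p : ℝ × ℝ => f p.1 * g p.2) (x, y) :=
        lintegral_congr fun z => by
          by_cases h : (x, z) ∈ s <;> simp [Set.indicator, h]

open Real in
lemma pdf_lower (α x : ℝ) :
    Real.exp (-α^2) / Real.sqrt 2 * gaussianPDFReal α (1/2 : NNReal) x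
      ≤ gaussianPDFReal 0 1 x := by
  have hπ := Real.pi_pos
  have e1 : gaussianPDFReal 0 1 x = (Real.sqrt 2 * Real.sqrt π)⁻¹ * Real.exp (-(x^2)/2) := by
    rw [gaussianPDFReal, ← Real.sqrt_mul (by norm_num)]
    norm_num
  have e2 : gaussianPDFReal α (1/2 : NNReal) x
      = (Real.sqrt π)⁻¹ * Real.exp (-((x-α)^2)) := by
    have hc : ((1/2 : NNReal) : ℝ) = 1/2 := by norm_num
    rw [gaussianPDFReal, hc, show 2*π*(1/2:ℝ) = π by ring,
      show 2*(1/2:ℝ) = 1 by norm_num, div_one]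
  rw [e1, e2]
  have key : Real.exp (-α^2) * Real.exp (-((x-α)^2)) ≤ Real.exp (-(x^2)/2) := by
    rw [← Real.exp_add, Real.exp_le_exp]
    nlinarith [sq_nonneg (x - 2*α)]
  have h2 : (0:ℝ) < (Real.sqrt 2)⁻¹ := by positivity
  have hp : (0:ℝ) < (Real.sqrt π)⁻¹ := by positivity
  calc Real.exp (-α^2) / Real.sqrt 2 * ((Real.sqrt π)⁻¹ * Real.exp (-((x-α)^2)))
      = (Real.sqrt 2)⁻¹ * (Real.sqrt π)⁻¹
          * (Real.exp (-α^2) * Real.exp (-((x-α)^2))) := by ring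
    _ ≤ (Real.sqrt 2)⁻¹ * (Real.sqrt π)⁻¹ * Real.exp (-(x^2)/2) := by
        have : (0:ℝ) ≤ (Real.sqrt 2)⁻¹ * (Real.sqrt π)⁻¹ := by positivity
        exact mul_le_mul_of_nonneg_left key this
    _ = (Real.sqrt 2 * Real.sqrt π)⁻¹ * Real.exp (-(x^2)/2) := by rw [mul_inv]

open Real in
lemma pdf_upper (α : ℝ) (hα : 0 ≤ α) (x z : ℝ) (hxz : α ≤ x + z) :
    gaussianPDFReal 0 1 x * gaussianPDFReal 0 1 z
      ≤ Real.exp (-α^2/4) * (gaussianPDFReal (α/2) 1 x * gaussianPDFReal (α/2) 1 z) := by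
  have hπ := Real.pi_pos
  simp only [gaussianPDFReal, NNReal.coe_one, mul_one, sub_zero]
  have key : Real.exp (-(x^2)/2) * Real.exp (-(z^2)/2)
      ≤ Real.exp (-α^2/4) * (Real.exp (-((x - α/2)^2)/2) * Real.exp (-((z - α/2)^2)/2)) := by
    rw [← Real.exp_add, ← Real.exp_add, ← Real.exp_add, Real.exp_le_exp]
    nlinarith [mul_le_mul_of_nonneg_left hxz (by linarith : (0:ℝ) ≤ α/2)]
  have hs : (0:ℝ) < (Real.sqrt (2*π))⁻¹ := by positivity
  calc (Real.sqrt (2*π))⁻¹ * Real.exp (-x^2/(2:ℝ)) * ((Real.sqrt (2*π))⁻¹ * Real.exp (-z^2/(2:ℝ)))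
      = (Real.sqrt (2*π))⁻¹ * (Real.sqrt (2*π))⁻¹
          * (Real.exp (-(x^2)/2) * Real.exp (-(z^2)/2)) := by ring_nf
    _ ≤ (Real.sqrt (2*π))⁻¹ * (Real.sqrt (2*π))⁻¹
          * (Real.exp (-α^2/4) * (Real.exp (-((x - α/2)^2)/2) * Real.exp (-((z - α/2)^2)/2))) := by
        exact mul_le_mul_of_nonneg_left key (by positivity)
    _ = Real.exp (-α^2/4) * ((Real.sqrt (2*π))⁻¹ * Real.exp (-(x - α/2)^2/(2:ℝ))
          * ((Real.sqrt (2*π))⁻¹ * Real.exp (-(z - α/2)^2/(2:ℝ)))) := by ring_nf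

/-- Two-sided bound on the standard Gaussian measure of the intersection of the
positive quadrant with the half-plane `{x + z ≥ α}`: for every `α ≥ 0`,
`(1/(4√2))·e^{-α²} ≤ γ({x + z ≥ α, x ≥ 0, z ≥ 0}) ≤ (1/√2)·e^{-α²/4}`. -/
theorem stmt_8 (α : ℝ) (hα : 0 ≤ α) :
    1 / (4 * Real.sqrt 2) * Real.exp (-α ^ 2) ≤
      (((gaussianReal 0 1).prod (gaussianReal 0 1))
        {p : ℝ × ℝ | α ≤ p.1 + p.2 ∧ 0 ≤ p.1 ∧ 0 ≤ p.2}).toReal ∧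
    (((gaussianReal 0 1).prod (gaussianReal 0 1))
        {p : ℝ × ℝ | α ≤ p.1 + p.2 ∧ 0 ≤ p.1 ∧ 0 ≤ p.2}).toReal ≤
      1 / Real.sqrt 2 * Real.exp (-α ^ 2 / 4) := by
  have hπ := Real.pi_pos
  set γ := (gaussianReal 0 1).prod (gaussianReal 0 1) with hγ
  set S : Set (ℝ × ℝ) := {p : ℝ × ℝ | α ≤ p.1 + p.2 ∧ 0 ≤ p.1 ∧ 0 ≤ p.2} with hSdef
  have hS : MeasurableSet S := by
    have : S = {p : ℝ × ℝ | α ≤ p.1 + p.2} ∩ ({p : ℝ × ℝ | 0 ≤ p.1} ∩ {p : ℝ × ℝ | 0 ≤ p.2}) := by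
      ext p; simp [hSdef, and_assoc]
    rw [this]
    exact (measurableSet_le measurable_const (by fun_prop)).inter
      ((measurableSet_le measurable_const measurable_fst).inter
        (measurableSet_le measurable_const measurable_snd))
  have hfin : γ S ≠ ⊤ := measure_ne_top _ _
  have h12 : (1/2 : NNReal) ≠ 0 := by norm_num
  have hhalfreal : ((1:ENNReal)/2) = ENNReal.ofReal (1/2) := by
    rw [ENNReal.ofReal_div_of_pos (by norm_num)]; norm_num
  constructor
  · -- lower bound
    have hsub : Set.Ici α ×ˢ Set.Ici (0:ℝ) ⊆ S := by
      rintro ⟨x, z⟩ ⟨hx, hz⟩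
      simp only [Set.mem_Ici] at hx hz
      exact ⟨by linarith, by linarith, hz⟩
    have hIci0 : gaussianReal 0 1 (Set.Ici (0:ℝ)) = 1/2 := gauss_Ici_half 0 one_ne_zero
    have hIciα : ENNReal.ofReal (Real.exp (-α^2) / Real.sqrt 2) * (1/2)
        ≤ gaussianReal 0 1 (Set.Ici α) := by
      rw [← gauss_Ici_half α h12, gaussianReal_apply α h12, gaussianReal_apply 0 one_ne_zero,
        ← lintegral_const_mul _ (measurable_gaussianPDF _ _)]
      refine lintegral_mono fun x => ?_
      rw [gaussianPDF_def, gaussianPDF_def,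
        ← ENNReal.ofReal_mul (by positivity)]
      exact ENNReal.ofReal_le_ofReal (pdf_lower α x)
    have hchain : ENNReal.ofReal (Real.exp (-α^2) / Real.sqrt 2) * (1/2) * (1/2) ≤ γ S := by
      calc ENNReal.ofReal (Real.exp (-α^2) / Real.sqrt 2) * (1/2) * (1/2)
          ≤ gaussianReal 0 1 (Set.Ici α) * gaussianReal 0 1 (Set.Ici (0:ℝ)) := by
            rw [hIci0]; exact mul_le_mul_left hIciα _
        _ = γ (Set.Ici α ×ˢ Set.Ici (0:ℝ)) := (Measure.prod_prod _ _).symm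
        _ ≤ γ S := measure_mono hsub
    have heq : ENNReal.ofReal (Real.exp (-α^2) / Real.sqrt 2) * (1/2) * (1/2)
        = ENNReal.ofReal (1 / (4 * Real.sqrt 2) * Real.exp (-α^2)) := by
      rw [hhalfreal, ← ENNReal.ofReal_mul (by positivity),
        ← ENNReal.ofReal_mul (by positivity)]
      congr 1
      have h2 : (0:ℝ) < Real.sqrt 2 := by positivity
      field_simp
      ring
    rw [heq] at hchain
    exact (ENNReal.ofReal_le_iff_le_toReal hfin).mp hchain
  · -- upper bound
    have hvol : γ S = ∫⁻ p in S, gaussianPDF 0 1 p.1 * gaussianPDF 0 1 p.2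
        ∂((volume : Measure ℝ).prod volume) := by
      rw [hγ, gaussianReal_of_var_ne_zero 0 one_ne_zero,
        prod_withDensity_apply _ _ (measurable_gaussianPDF _ _) (measurable_gaussianPDF _ _) hS]
    have hvol' : ((gaussianReal (α/2) 1).prod (gaussianReal (α/2) 1)) S
        = ∫⁻ p in S, gaussianPDF (α/2) 1 p.1 * gaussianPDF (α/2) 1 p.2
        ∂((volume : Measure ℝ).prod volume) := by
      rw [gaussianReal_of_var_ne_zero _ one_ne_zero,
        prod_withDensity_apply _ _ (measurable_gaussianPDF _ _) (measurable_gaussianPDF _ _) hS]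
    have hhalf : ((gaussianReal (α/2) 1).prod (gaussianReal (α/2) 1))
        {p : ℝ × ℝ | α ≤ p.1 + p.2} = 1/2 := by
      have := gauss_prod_halfplane (α/2) (v := 1) one_ne_zero
      rwa [show 2*(α/2) = α by ring] at this
    have hstep : γ S ≤ ENNReal.ofReal (Real.exp (-α^2/4)) * (1/2) := by
      calc γ S = ∫⁻ p in S, gaussianPDF 0 1 p.1 * gaussianPDF 0 1 p.2
            ∂((volume : Measure ℝ).prod volume) := hvol
        _ ≤ ∫⁻ p in S, ENNReal.ofReal (Real.exp (-α^2/4))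
              * (gaussianPDF (α/2) 1 p.1 * gaussianPDF (α/2) 1 p.2)
            ∂((volume : Measure ℝ).prod volume) := by
            refine setLIntegral_mono
              (measurable_const.mul (((measurable_gaussianPDF _ _).comp measurable_fst).mul
                ((measurable_gaussianPDF _ _).comp measurable_snd))) fun p hp => ?_
            show ENNReal.ofReal _ * ENNReal.ofReal _ ≤ _
            rw [← ENNReal.ofReal_mul (gaussianPDFReal_nonneg _ _ _)]
            show _ ≤ _ * (ENNReal.ofReal _ * ENNReal.ofReal _)
            rw [← ENNReal.ofReal_mul (gaussianPDFReal_nonneg _ _ _),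
              ← ENNReal.ofReal_mul (Real.exp_pos _).le]
            exact ENNReal.ofReal_le_ofReal (pdf_upper α hα p.1 p.2 hp.1)
        _ = ENNReal.ofReal (Real.exp (-α^2/4))
              * ∫⁻ p in S, gaussianPDF (α/2) 1 p.1 * gaussianPDF (α/2) 1 p.2
            ∂((volume : Measure ℝ).prod volume) := lintegral_const_mul _
              (((measurable_gaussianPDF _ _).comp measurable_fst).mul
                ((measurable_gaussianPDF _ _).comp measurable_snd))
        _ = ENNReal.ofReal (Real.exp (-α^2/4))
              * ((gaussianReal (α/2) 1).prod (gaussianReal (α/2) 1)) S := by rw [hvol']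
        _ ≤ ENNReal.ofReal (Real.exp (-α^2/4)) * (1/2) := by
            rw [← hhalf]
            exact mul_le_mul_right (measure_mono fun p hp => hp.1) _
    have hfinal : ENNReal.ofReal (Real.exp (-α^2/4)) * (1/2)
        ≤ ENNReal.ofReal (1 / Real.sqrt 2 * Real.exp (-α^2/4)) := by
      rw [hhalfreal, ← ENNReal.ofReal_mul (by positivity)]
      refine ENNReal.ofReal_le_ofReal ?_
      have h2 : Real.sqrt 2 ≤ 2 := by
        nlinarith [Real.sq_sqrt (by norm_num : (2:ℝ) ≥ 0), Real.sqrt_nonneg 2]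
      have h2' : (0:ℝ) < Real.sqrt 2 := by positivity
      have h3 : (1:ℝ)/2 ≤ 1 / Real.sqrt 2 :=
        one_div_le_one_div_of_le h2' h2
      nlinarith [Real.exp_pos (-α^2/4), h3]
    exact ENNReal.toReal_le_of_le_ofReal (by positivity) (hstep.trans hfinal)
end

section
/- Fix c ∈ (0,1) and functions g, h : ℝ^d → ℝ with P g ≥ g pointwise, P h = h pointwise, and max(g, 0) ≤ h pointwise. Define (D f)(y) = max(c·(P f)(y), g(y)) and set q_n := Dⁿ(max(g,0)) for n ∈ ℕ (the n-fold iterate of D applied to the pointwise maximum of g and 0). Then: (a) q_n ≤ q_{n+1} pointwise for all n; (b) q_n ≤ h pointwise for all n, so that q(x) := sup_{n∈ℕ} q_n(x) defines a real-valued function with q ≤ h pointwise; (c) P q ≥ q pointwise; (d) D q = q; and (e) for every p : ℝ^d → ℝ with p ≥ 0 pointwise and D p = p, one has q ≤ p pointwise; i.e. q is the smallest nonnegative fixed point of D. -/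
/-- The weighted arithmetic average operator
`(P f)(y) = Σ_{i=1}^m α_i · f(y − x_i)` on functions `ℝ^d → ℝ`. -/
noncomputable def avgOp {d m : ℕ} (α : Fin m → ℝ) (x : Fin m → (Fin d → ℝ))
    (f : (Fin d → ℝ) → ℝ) : (Fin d → ℝ) → ℝ :=
  fun y => ∑ i, α i * f (y - x i)

/-- The one-step cubature pricing operator `(D f)(y) = max(c·(P f)(y), g(y))`. -/
noncomputable def cubD {d m : ℕ} (c : ℝ) (α : Fin m → ℝ) (x : Fin m → (Fin d → ℝ))
    (g : (Fin d → ℝ) → ℝ) (f : (Fin d → ℝ) → ℝ) : (Fin d → ℝ) → ℝ :=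
  fun y => max (c * avgOp α x f y) (g y)

/-- Monotone convergence of the cubature iteration: the iterates
`q_n = Dⁿ(g ∨ 0)` increase pointwise, are dominated by `h`, and their pointwise
supremum `q` satisfies `q ≤ h`, `P q ≥ q`, `D q = q`, and `q` is the smallest
nonnegative fixed point of `D`. -/
theorem stmt_10 {d m : ℕ} (hd : 1 ≤ d) (hm : 1 ≤ m)
    (α : Fin m → ℝ) (hα : ∀ i, α i ∈ Set.Ioc (0 : ℝ) 1) (hsum : ∑ i, α i = 1)
    (x : Fin m → (Fin d → ℝ)) (c : ℝ) (hc : c ∈ Set.Ioo (0 : ℝ) 1)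
    (g h : (Fin d → ℝ) → ℝ)
    (hg : ∀ y, g y ≤ avgOp α x g y)
    (hh : ∀ y, avgOp α x h y = h y)
    (hgh : ∀ y, max (g y) 0 ≤ h y) :
    let qn : ℕ → (Fin d → ℝ) → ℝ := fun n => (cubD c α x g)^[n] (fun y => max (g y) 0)
    let q : (Fin d → ℝ) → ℝ := fun y => ⨆ n : ℕ, qn n y
    (∀ n y, qn n y ≤ qn (n + 1) y) ∧
    (∀ n y, qn n y ≤ h y) ∧
    (∀ y, q y ≤ h y) ∧
    (∀ y, q y ≤ avgOp α x q y) ∧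
    cubD c α x g q = q ∧
    (∀ p : (Fin d → ℝ) → ℝ, (∀ y, 0 ≤ p y) → cubD c α x g p = p → ∀ y, q y ≤ p y) := by
  intro qn q
  have hα0 : ∀ i, (0:ℝ) ≤ α i := fun i => (hα i).1.le
  have Pmono : ∀ f₁ f₂ : (Fin d → ℝ) → ℝ, (∀ y, f₁ y ≤ f₂ y) →
      ∀ y, avgOp α x f₁ y ≤ avgOp α x f₂ y := by
    intro f₁ f₂ hf y
    exact Finset.sum_le_sum fun i _ => mul_le_mul_of_nonneg_left (hf _) (hα0 i)
  have Pnonneg : ∀ f : (Fin d → ℝ) → ℝ, (∀ y, 0 ≤ f y) → ∀ y, 0 ≤ avgOp α x f y := by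
    intro f hf y
    exact Finset.sum_nonneg fun i _ => mul_nonneg (hα0 i) (hf _)
  have Dmono : ∀ f₁ f₂, (∀ y, f₁ y ≤ f₂ y) →
      ∀ y, cubD c α x g f₁ y ≤ cubD c α x g f₂ y := by
    intro f₁ f₂ hf y
    exact max_le_max (mul_le_mul_of_nonneg_left (Pmono _ _ hf y) hc.1.le) le_rfl
  have hq0 : ∀ y, qn 0 y = max (g y) 0 := fun y => rfl
  have hqs : ∀ n, qn (n + 1) = cubD c α x g (qn n) := by
    intro n
    show (cubD c α x g)^[n+1] _ = _
    rw [Function.iterate_succ_apply']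
  have hq0nonneg : ∀ y, (0:ℝ) ≤ qn 0 y := fun y => le_max_right _ _
  have hqnonneg : ∀ n y, (0:ℝ) ≤ qn n y := by
    intro n
    induction n with
    | zero => exact hq0nonneg
    | succ n ih =>
      intro y
      rw [hqs]
      exact le_trans (mul_nonneg hc.1.le (Pnonneg _ ih y)) (le_max_left _ _)
  -- (a)
  have hmono : ∀ n y, qn n y ≤ qn (n + 1) y := by
    intro n
    induction n with
    | zero =>
      intro y
      rw [hqs]
      refine max_le (le_max_right _ _) ?_
      exact le_trans (mul_nonneg hc.1.le (Pnonneg _ hq0nonneg y)) (le_max_left _ _)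
    | succ n ih =>
      intro y
      rw [hqs, hqs]
      exact Dmono _ _ ih y
  have hmonoSeq : ∀ y, Monotone fun n => qn n y := fun y =>
    monotone_nat_of_le_succ fun n => hmono n y
  -- (b)
  have hhnn : ∀ y, (0:ℝ) ≤ h y := fun y => le_trans (le_max_right _ _) (hgh y)
  have hle_h : ∀ n y, qn n y ≤ h y := by
    intro n
    induction n with
    | zero => exact hgh
    | succ n ih =>
      intro y
      rw [hqs]
      refine max_le ?_ (le_trans (le_max_left _ _) (hgh y))
      calc c * avgOp α x (qn n) y ≤ c * avgOp α x h y :=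
            mul_le_mul_of_nonneg_left (Pmono _ _ ih y) hc.1.le
        _ = c * h y := by rw [hh]
        _ ≤ h y := mul_le_of_le_one_left (hhnn y) hc.2.le
  have bdd : ∀ y, BddAbove (Set.range fun n => qn n y) := by
    intro y
    exact ⟨h y, by rintro _ ⟨n, rfl⟩; exact hle_h n y⟩
  have qle : ∀ n y, qn n y ≤ q y := fun n y => le_ciSup (bdd y) n
  have qh : ∀ y, q y ≤ h y := fun y => ciSup_le fun n => hle_h n y
  have htend : ∀ y, Filter.Tendsto (fun n => qn n y) Filter.atTop (nhds (q y)) :=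
    fun y => tendsto_atTop_ciSup (hmonoSeq y) (bdd y)
  have Ptend : ∀ y, Filter.Tendsto (fun n => avgOp α x (qn n) y) Filter.atTop
      (nhds (avgOp α x q y)) := by
    intro y
    unfold avgOp
    exact tendsto_finset_sum _ fun i _ => (htend _).const_mul _
  -- subharmonicity of each iterate
  have hsub : ∀ n y, qn n y ≤ avgOp α x (qn n) y := by
    intro n
    induction n with
    | zero =>
      intro y
      refine max_le ?_ (Pnonneg _ hq0nonneg y)
      exact le_trans (hg y) (Pmono g _ (fun z => le_max_left _ _) y)
    | succ n ih =>
      intro y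
      rw [hqs]
      show max (c * avgOp α x (qn n) y) (g y) ≤ avgOp α x (cubD c α x g (qn n)) y
      have h1 : c * avgOp α x (qn n) y ≤ avgOp α x (cubD c α x g (qn n)) y := by
        calc c * avgOp α x (qn n) y
            ≤ c * avgOp α x (fun z => avgOp α x (qn n) z) y :=
              mul_le_mul_of_nonneg_left (Pmono _ _ ih y) hc.1.le
          _ = ∑ i, α i * (c * avgOp α x (qn n) (y - x i)) := by
              unfold avgOp; rw [Finset.mul_sum]; exact Finset.sum_congr rfl fun i _ => by ring
          _ ≤ avgOp α x (cubD c α x g (qn n)) y :=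
              Finset.sum_le_sum fun i _ =>
                mul_le_mul_of_nonneg_left (le_max_left _ _) (hα0 i)
      have h2 : g y ≤ avgOp α x (cubD c α x g (qn n)) y := by
        refine le_trans (hg y) ?_
        exact Pmono g _ (fun z => le_max_right _ _) y
      exact max_le h1 h2
  -- (c)
  have qPq : ∀ y, q y ≤ avgOp α x q y := by
    intro y
    exact le_of_tendsto_of_tendsto' (htend y) (Ptend y) fun n => hsub n y
  -- (d)
  have hDq : cubD c α x g q = q := by
    funext y
    apply le_antisymm
    · refine max_le ?_ ?_
      · have tcp : Filter.Tendsto (fun n => c * avgOp α x (qn n) y) Filter.atTop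
            (nhds (c * avgOp α x q y)) := (Ptend y).const_mul c
        refine le_of_tendsto tcp (Filter.Eventually.of_forall fun n => ?_)
        calc c * avgOp α x (qn n) y ≤ qn (n + 1) y := by rw [hqs]; exact le_max_left _ _
          _ ≤ q y := qle _ y
      · exact le_trans (le_max_left (g y) 0) (qle 0 y)
    · refine ciSup_le fun n => ?_
      calc qn n y ≤ qn (n + 1) y := hmono n y
        _ = cubD c α x g (qn n) y := by rw [hqs]
        _ ≤ cubD c α x g q y := Dmono _ _ (fun z => qle n z) y
  -- (e)
  have hmin : ∀ p : (Fin d → ℝ) → ℝ, (∀ y, 0 ≤ p y) → cubD c α x g p = p →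
      ∀ y, q y ≤ p y := by
    intro p hp hDp y
    have hn : ∀ n z, qn n z ≤ p z := by
      intro n
      induction n with
      | zero =>
        intro z
        refine max_le ?_ (hp z)
        calc g z ≤ cubD c α x g p z := le_max_right _ _
          _ = p z := by rw [hDp]
      | succ n ih =>
        intro z
        rw [hqs]
        calc cubD c α x g (qn n) z ≤ cubD c α x g p z := Dmono _ _ ih z
          _ = p z := by rw [hDp]
    exact ciSup_le fun n => hn n y
  exact ⟨hmono, hle_h, qh, qPq, hDq, hmin⟩
end

section
/- Fix c ∈ (0,1) and functions g, h : ℝ^d → ℝ with P g ≥ g pointwise, P h = h pointwise, and max(g, 0) ≤ h pointwise. Define (D f)(y) = max(c·(P f)(y), g(y)) and q_n := Dⁿ(max(g,0)). Then for every n ≥ 1, sup_{x∈ℝ^d} |q_{n+1}(x) − q_n(x)| ≤ c · sup_{x∈ℝ^d} |q_n(x) − q_{n−1}(x)|, where the suprema are taken in [0,∞]. In particular the iteration converges linearly in the supremum norm with contraction factor at most c. -/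
open scoped ENNReal

lemma cubD_contract {d m : ℕ} (α : Fin m → ℝ) (hα : ∀ i, 0 ≤ α i) (hsum : ∑ i, α i = 1)
    (x : Fin m → (Fin d → ℝ)) (c : ℝ) (hc : 0 ≤ c) (g f f' : (Fin d → ℝ) → ℝ) (y : Fin d → ℝ) :
    (‖cubD c α x g f y - cubD c α x g f' y‖₊ : ℝ≥0∞) ≤
      ENNReal.ofReal c * ⨆ z : Fin d → ℝ, (‖f z - f' z‖₊ : ℝ≥0∞) := by
  set S := ⨆ z : Fin d → ℝ, (‖f z - f' z‖₊ : ℝ≥0∞)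
  have h1 : |cubD c α x g f y - cubD c α x g f' y| ≤ c * ∑ i, α i * |f (y - x i) - f' (y - x i)| := by
    calc |cubD c α x g f y - cubD c α x g f' y|
        ≤ |c * avgOp α x f y - c * avgOp α x f' y| := abs_max_sub_max_le_abs _ _ _
      _ = c * |avgOp α x f y - avgOp α x f' y| := by
          rw [← mul_sub, abs_mul, abs_of_nonneg hc]
      _ ≤ c * ∑ i, α i * |f (y - x i) - f' (y - x i)| := by
          apply mul_le_mul_of_nonneg_left _ hc
          unfold avgOp
          rw [← Finset.sum_sub_distrib]
          refine (Finset.abs_sum_le_sum_abs _ _).trans ?_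
          apply Finset.sum_le_sum
          intro i _
          rw [← mul_sub, abs_mul, abs_of_nonneg (hα i)]
  calc (‖cubD c α x g f y - cubD c α x g f' y‖₊ : ℝ≥0∞)
      = ENNReal.ofReal |cubD c α x g f y - cubD c α x g f' y| := by
        rw [← enorm_eq_nnnorm, Real.enorm_eq_ofReal_abs]
    _ ≤ ENNReal.ofReal (c * ∑ i, α i * |f (y - x i) - f' (y - x i)|) :=
        ENNReal.ofReal_le_ofReal h1
    _ = ENNReal.ofReal c * ENNReal.ofReal (∑ i, α i * |f (y - x i) - f' (y - x i)|) :=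
        ENNReal.ofReal_mul hc
    _ = ENNReal.ofReal c * ∑ i, ENNReal.ofReal (α i * |f (y - x i) - f' (y - x i)|) := by
        rw [ENNReal.ofReal_sum_of_nonneg]
        intro i _; exact mul_nonneg (hα i) (abs_nonneg _)
    _ ≤ ENNReal.ofReal c * ∑ i, ENNReal.ofReal (α i) * S := by
        gcongr with i
        rw [ENNReal.ofReal_mul (hα i)]
        gcongr
        rw [← Real.enorm_eq_ofReal_abs, enorm_eq_nnnorm]
        exact le_iSup (fun z => (‖f z - f' z‖₊ : ℝ≥0∞)) (y - x i)
    _ = ENNReal.ofReal c * S := by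
        rw [← Finset.sum_mul, ← ENNReal.ofReal_sum_of_nonneg (fun i _ => hα i), hsum,
          ENNReal.ofReal_one, one_mul]

/-- Linear convergence of the cubature iteration in the supremum norm:
for `n ≥ 1`, `sup_y |q_{n+1}(y) − q_n(y)| ≤ c · sup_y |q_n(y) − q_{n−1}(y)|`,
the suprema being taken in `[0,∞]`. -/
theorem stmt_11 {d m : ℕ} (hd : 1 ≤ d) (hm : 1 ≤ m)
    (α : Fin m → ℝ) (hα : ∀ i, α i ∈ Set.Ioc (0 : ℝ) 1) (hsum : ∑ i, α i = 1)
    (x : Fin m → (Fin d → ℝ)) (c : ℝ) (hc : c ∈ Set.Ioo (0 : ℝ) 1)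
    (g h : (Fin d → ℝ) → ℝ)
    (hg : ∀ y, g y ≤ avgOp α x g y)
    (hh : ∀ y, avgOp α x h y = h y)
    (hgh : ∀ y, max (g y) 0 ≤ h y)
    (n : ℕ) (hn : 1 ≤ n) :
    let qn : ℕ → (Fin d → ℝ) → ℝ := fun k => (cubD c α x g)^[k] (fun y => max (g y) 0)
    (⨆ y : Fin d → ℝ, (‖qn (n + 1) y - qn n y‖₊ : ℝ≥0∞)) ≤
      ENNReal.ofReal c * ⨆ y : Fin d → ℝ, (‖qn n y - qn (n - 1) y‖₊ : ℝ≥0∞) := by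
  intro qn
  have key1 : qn (n + 1) = cubD c α x g (qn n) := Function.iterate_succ_apply' _ _ _
  have key2 : qn n = cubD c α x g (qn (n - 1)) := by
    conv_lhs => rw [show n = (n - 1) + 1 by omega]
    exact Function.iterate_succ_apply' _ _ _
  rw [key1, key2]
  exact iSup_le fun y => cubD_contract α (fun i => (hα i).1.le) hsum x c hc.1.le g _ _ y
end

section
/- Let c ∈ (0,1) and b ≥ 1 with c·b < 1, let K ≥ 0, and let f̄ : ℝ^d → ℝ satisfy f̄ ≥ 0 pointwise and P f̄ ≥ b·f̄ pointwise. Set g := K − f̄ (pointwise) and assume that for all y ∈ ℝ^d, P(max(g,0))(y) = P(g)(y) implies g(y) ≥ 0. Then for all y ∈ ℝ^d, P(max(g,0))(y) = P(g)(y) implies g(y) ≥ c·P(max(g,0))(y). In other words, the set {P(max(g,0)) = P g} is contained in the set {g ≥ c·P(max(g,0))}. -/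
/-- If `c ∈ (0,1)`, `b ≥ 1` with `c·b < 1`, `K ≥ 0`, `f̄ ≥ 0` with `P f̄ ≥ b·f̄`,
`g = K − f̄`, and `g ≥ 0` holds on the set `{P(g ∨ 0) = P g}`, then on that set
one even has `g ≥ c·P(g ∨ 0)`: immediate exercise dominates continuation. -/
theorem stmt_14 {d m : ℕ} (hd : 1 ≤ d) (hm : 1 ≤ m)
    (α : Fin m → ℝ) (hα : ∀ i, α i ∈ Set.Ioc (0 : ℝ) 1) (hsum : ∑ i, α i = 1)
    (x : Fin m → (Fin d → ℝ)) (c b : ℝ) (hc : c ∈ Set.Ioo (0 : ℝ) 1)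
    (hb : 1 ≤ b) (hcb : c * b < 1) (K : ℝ) (hK : 0 ≤ K)
    (fbar : (Fin d → ℝ) → ℝ) (hf0 : ∀ y, 0 ≤ fbar y)
    (hPf : ∀ y, b * fbar y ≤ avgOp α x fbar y)
    (hnn : ∀ y, avgOp α x (fun z => max (K - fbar z) 0) y
        = avgOp α x (fun z => K - fbar z) y → 0 ≤ K - fbar y) :
    ∀ y, avgOp α x (fun z => max (K - fbar z) 0) y
        = avgOp α x (fun z => K - fbar z) y →
      c * avgOp α x (fun z => max (K - fbar z) 0) y ≤ K - fbar y := by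
  intro y hy
  have hg := hnn y hy
  have hPg : avgOp α x (fun z => K - fbar z) y = K - avgOp α x fbar y := by
    simp only [avgOp, mul_sub, Finset.sum_sub_distrib, ← Finset.sum_mul, hsum, one_mul]
  rw [hy, hPg]
  have hf := hPf y
  have hfK : fbar y ≤ K := by linarith
  have h0c : 0 < c := hc.1
  have hc1 : c < 1 := hc.2
  have : c * (K - avgOp α x fbar y) ≤ c * (K - b * fbar y) := by
    have := hPf y; nlinarith
  have h2 : c * (K - b * fbar y) ≤ K - fbar y := by nlinarith [mul_nonneg (le_of_lt (by linarith : (0:ℝ) < 1 - c * b)) hg, mul_nonneg (mul_nonneg h0c.le (by linarith : (0:ℝ) ≤ b - 1)) hK]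
  linarith
end

section
/- Let c ∈ (0,1) and γ be real numbers with c·γ ≥ 1, let K ≥ 0, and let f̄ : ℝ^d → ℝ satisfy f̄ ≥ 0 pointwise and P f̄ ≤ γ·f̄ pointwise. Set g := K − f̄ (pointwise) and define the operators B₁ f := max(c·P f, g) and B₂ f := max(c²·P(P f), g) (both pointwise maxima). Then for every f : ℝ^d → ℝ with f ≥ max(g,0) pointwise and every y ∈ ℝ^d: 0 ≤ B₁(B₁ f)(y) − B₂ f(y) ≤ c·K·(γ − 1). -/
/-- Halving the exercise mesh changes the Bermudan value by at most `c·K·(γ−1)`: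
with `g = K − f̄`, `B₁ f = max(c·P f, g)` and `B₂ f = max(c²·P(P f), g)`, one has
`0 ≤ B₁(B₁ f) − B₂ f ≤ c·K·(γ − 1)` pointwise, for every `f ≥ g ∨ 0`. -/
theorem stmt_15 {d m : ℕ} (hd : 1 ≤ d) (hm : 1 ≤ m)
    (α : Fin m → ℝ) (hα : ∀ i, α i ∈ Set.Ioc (0 : ℝ) 1) (hsum : ∑ i, α i = 1)
    (x : Fin m → (Fin d → ℝ)) (c γ : ℝ) (hc : c ∈ Set.Ioo (0 : ℝ) 1)
    (hcγ : 1 ≤ c * γ) (K : ℝ) (hK : 0 ≤ K)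
    (fbar : (Fin d → ℝ) → ℝ) (hf0 : ∀ y, 0 ≤ fbar y)
    (hPf : ∀ y, avgOp α x fbar y ≤ γ * fbar y) :
    let g : (Fin d → ℝ) → ℝ := fun y => K - fbar y
    let B₁ : ((Fin d → ℝ) → ℝ) → (Fin d → ℝ) → ℝ :=
      fun f y => max (c * avgOp α x f y) (g y)
    let B₂ : ((Fin d → ℝ) → ℝ) → (Fin d → ℝ) → ℝ :=
      fun f y => max (c ^ 2 * avgOp α x (avgOp α x f) y) (g y)
    ∀ f : (Fin d → ℝ) → ℝ, (∀ y, max (g y) 0 ≤ f y) →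
      ∀ y, 0 ≤ B₁ (B₁ f) y - B₂ f y ∧ B₁ (B₁ f) y - B₂ f y ≤ c * K * (γ - 1) := by
  intro g B₁ B₂ f hf y
  have hα0 : ∀ i, (0:ℝ) ≤ α i := fun i => (hα i).1.le
  obtain ⟨hc0, hc1⟩ := hc
  have hγ1 : 1 < γ := by nlinarith
  have hγ0 : (0:ℝ) < γ := by linarith
  have hD : 0 ≤ K * (γ - 1) := mul_nonneg hK (by linarith)
  -- monotonicity of P
  have mono : ∀ f₁ f₂ : (Fin d → ℝ) → ℝ, (∀ z, f₁ z ≤ f₂ z) →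
      ∀ z, avgOp α x f₁ z ≤ avgOp α x f₂ z := by
    intro f₁ f₂ h z
    exact Finset.sum_le_sum fun i _ => mul_le_mul_of_nonneg_left (h _) (hα0 i)
  have hfg : ∀ z, g z ≤ f z := fun z => le_trans (le_max_left _ _) (hf z)
  have hf0' : ∀ z, 0 ≤ f z := fun z => le_trans (le_max_right _ _) (hf z)
  have hPf0 : ∀ z, 0 ≤ avgOp α x f z := by
    intro z
    exact Finset.sum_nonneg fun i _ => mul_nonneg (hα0 i) (hf0' _)
  have hPfK : ∀ z, K - γ * fbar z ≤ avgOp α x f z := by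
    intro z
    have h1 : avgOp α x g z ≤ avgOp α x f z := mono _ _ hfg z
    have h2 : avgOp α x g z = K - avgOp α x fbar z := by
      simp only [avgOp, g, mul_sub, Finset.sum_sub_distrib, ← Finset.sum_mul, hsum, one_mul]
    have h3 := hPf z
    linarith
  -- key pointwise bound : B₁ f ≤ c * P f + K*(γ-1)
  have key : ∀ z, B₁ f z ≤ c * avgOp α x f z + K * (γ - 1) := by
    intro z
    apply max_le
    · linarith
    · show K - fbar z ≤ _
      rcases le_or_gt (K / γ) (fbar z) with h | h
      · have h' : K ≤ fbar z * γ := (div_le_iff₀ hγ0).mp h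
        have hcp : 0 ≤ c * avgOp α x f z := mul_nonneg hc0.le (hPf0 z)
        nlinarith [hf0 z]
      · have h' : fbar z * γ < K := (lt_div_iff₀ hγ0).mp h
        have h2 := hPfK z
        have hcp : c * (K - γ * fbar z) ≤ c * avgOp α x f z :=
          mul_le_mul_of_nonneg_left h2 hc0.le
        nlinarith [mul_nonneg (by linarith : (0:ℝ) ≤ c * γ - 1) (hf0 z),
          mul_nonneg hK (sq_nonneg (γ - 1))]
  -- P of (c * P f + D) = c * PPf + D
  have Paff : avgOp α x (fun z => c * avgOp α x f z + K * (γ - 1)) y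
      = c * avgOp α x (avgOp α x f) y + K * (γ - 1) := by
    simp only [avgOp, mul_add, Finset.sum_add_distrib, Finset.mul_sum, mul_left_comm]
    congr 1
    rw [← Finset.mul_sum, ← Finset.sum_mul, hsum, one_mul]
  -- lower bound
  have hlow : B₂ f y ≤ B₁ (B₁ f) y := by
    have h1 : ∀ z, c * avgOp α x f z ≤ B₁ f z := fun z => le_max_left _ _
    have h2 : c * avgOp α x (fun z => c * avgOp α x f z) y ≤ c * avgOp α x (B₁ f) y :=
      mul_le_mul_of_nonneg_left (mono _ _ h1 y) hc0.le
    have h3 : c * avgOp α x (fun z => c * avgOp α x f z) y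
        = c ^ 2 * avgOp α x (avgOp α x f) y := by
      simp only [avgOp]
      rw [Finset.mul_sum, Finset.mul_sum]
      refine Finset.sum_congr rfl fun i _ => ?_
      ring
    exact max_le_max (h3 ▸ h2) le_rfl
  -- upper bound
  have hup : B₁ (B₁ f) y ≤ B₂ f y + c * K * (γ - 1) := by
    have h2 : c * avgOp α x (B₁ f) y ≤ c * (c * avgOp α x (avgOp α x f) y + K * (γ - 1)) :=
      mul_le_mul_of_nonneg_left (le_trans (mono _ _ key y) (le_of_eq Paff)) hc0.le
    apply max_le
    · calc c * avgOp α x (B₁ f) y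
          ≤ c ^ 2 * avgOp α x (avgOp α x f) y + c * K * (γ - 1) := by nlinarith
        _ ≤ B₂ f y + c * K * (γ - 1) := by
            exact add_le_add_left (le_max_left _ _) _
    · have : g y ≤ B₂ f y := le_max_right _ _
      have hcD : 0 ≤ c * K * (γ - 1) := mul_nonneg (mul_nonneg hc0.le hK) (by linarith)
      linarith
  constructor <;> linarith
end
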